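/- Let Λ = {Λ_i ∈ B(X₂, Y_i)} be a qg-Riesz basis for X₂^* and Θ = {Θ_i ∈ B(X₁^*, Y_i^*)} a pg-Riesz basis for X₁. If m = {m_i} satisfies 0 < inf_i |m_i| ≤ sup_i |m_i| < ∞, then the multiplier M_{m,Λ,Θ} : X₁^* → X₂^* is invertible, with inverse M_{1/m, ~Θ, ~Λ} where ~Λ and ~Θ are the dual Riesz bases of Λ and Θ. -/

import Mathlib

/-!
Biorthogonality makes the composition of the two multipliers collapse termwise:
`~Λ_k (M_{m,Λ,Θ} g) = m_k Θ_k g`, so `M_{1/m,~Θ,~Λ} (M_{m,Λ,Θ} g) = Σ_k ~Θ_k^* Θ_k g = g`, and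
symmetrically in the other order. The analytic content is the convergence of both series.
The upper Riesz bound of `Θ`, tested against norming functionals, puts `(Θ_i g)` in `ℓ^q`; the
lower Riesz bound of `Λ` puts `(~Λ_k f)` in `ℓ^q`; and `~Θ` satisfies an upper Riesz bound because
Banach–Steinhaus bounds the partial sums of `Σ_k ~Θ_k^* Θ_k` uniformly, which through the lower
Riesz bound of `Θ` and Hölder's inequality controls `Σ_k ‖~Θ_k x‖^p`.
-/

open NormedSpace Filter

/-- The Banach-space adjoint (dual map) of a continuous linear map. -/
noncomputable def opAdj {X Y : Type*} [NormedAddCommGroup X] [NormedSpace ℝ X]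
    [NormedAddCommGroup Y] [NormedSpace ℝ Y] (T : X →L[ℝ] Y) :
    StrongDual ℝ Y →L[ℝ] StrongDual ℝ X :=
  (ContinuousLinearMap.compL ℝ X Y ℝ).flip T

@[simp]
theorem opAdj_apply {X Y : Type*} [NormedAddCommGroup X] [NormedSpace ℝ X]
    [NormedAddCommGroup Y] [NormedSpace ℝ Y] (T : X →L[ℝ] Y) (y : StrongDual ℝ Y) (x : X) :
    opAdj T y x = y (T x) :=
  rfl

section Multiplier

variable {𝕜 V W : Type*} [NormedField 𝕜] [NormedAddCommGroup V] [NormedSpace 𝕜 V]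
  [NormedAddCommGroup W] [NormedSpace 𝕜 W]
  {Z : ℕ → Type*} [∀ i, NormedAddCommGroup (Z i)] [∀ i, NormedSpace 𝕜 (Z i)]

/-- The paper's `M_{m,Λ,Θ}` is `multiplier m (fun i => opAdj (Λ i)) Θ`. -/
noncomputable def multiplier (c : ℕ → 𝕜) (U : ∀ i, Z i →L[𝕜] W) (A : ∀ i, V →L[𝕜] Z i)
    (v : V) : W :=
  ∑' i, c i • U i (A i v)

theorem apply_tsum_of_biorthogonal {D : ∀ k, W →L[𝕜] Z k} {U : ∀ i, Z i →L[𝕜] W}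
    (hbi : ∀ (k i : ℕ) (y : Z i), D k (U i y) = if h : i = k then h ▸ y else 0)
    {y : ∀ i, Z i} (hy : Summable fun i => U i (y i)) (k : ℕ) :
    D k (∑' i, U i (y i)) = y k := by
  rw [← (hy.hasSum.mapL (D k)).tsum_eq, tsum_eq_single k fun i hik => by simp [hbi, hik]]
  simp [hbi]

theorem hasSum_multiplier_inv_multiplier {c : ℕ → 𝕜} (hc : ∀ i, c i ≠ 0)
    {U : ∀ i, Z i →L[𝕜] W} {A : ∀ i, V →L[𝕜] Z i} {Ud : ∀ i, Z i →L[𝕜] V}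
    {D : ∀ i, W →L[𝕜] Z i}
    (hbi : ∀ (k i : ℕ) (y : Z i), D k (U i y) = if h : i = k then h ▸ y else 0)
    {v : V} (hrec : HasSum (fun k => Ud k (A k v)) v)
    (hsum : Summable fun i => c i • U i (A i v)) :
    HasSum (fun k => (c k)⁻¹ • Ud k (D k (multiplier c U A v))) v := by
  have hsum' : Summable fun i => U i (c i • A i v) := by simpa only [map_smul] using hsum
  have hcoef : ∀ k, D k (multiplier c U A v) = c k • A k v := by
    simpa only [multiplier, map_smul] using apply_tsum_of_biorthogonal hbi hsum'
  simpa only [hcoef, map_smul, smul_smul, inv_mul_cancel₀ (hc _), one_smul] using hrec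

end Multiplier

section RieszBounds

variable {ι : Type*}

theorem Summable.exists_norm_finset_sum_le {E : Type*} [SeminormedAddCommGroup E] {u : ι → E}
    (hu : Summable u) : ∃ C, ∀ s : Finset ι, ‖∑ i ∈ s, u i‖ ≤ C := by
  classical
  obtain ⟨s₀, hs₀⟩ := hu.vanishing (Metric.ball_mem_nhds (0 : E) one_pos)
  refine ⟨∑ i ∈ s₀, ‖u i‖ + 1, fun s => ?_⟩
  have hout : ‖∑ i ∈ s \ s₀, u i‖ < 1 := by
    simpa using hs₀ (s \ s₀) Finset.sdiff_disjoint
  calc ‖∑ i ∈ s, u i‖ = ‖∑ i ∈ s ∩ s₀, u i + ∑ i ∈ s \ s₀, u i‖ := by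
        rw [Finset.sum_inter_add_sum_sdiff]
    _ ≤ ∑ i ∈ s ∩ s₀, ‖u i‖ + 1 :=
        (norm_add_le _ _).trans (add_le_add (norm_sum_le _ _) hout.le)
    _ ≤ ∑ i ∈ s₀, ‖u i‖ + 1 := by
        gcongr
        exact Finset.inter_subset_right

theorem summable_of_norm_sum_le_mul_rpow {E : Type*} [NormedAddCommGroup E] [CompleteSpace E]
    {u : ι → E} {c : ι → ℝ} (hc0 : 0 ≤ c) (hc : Summable c) {B r : ℝ} (hB : 0 ≤ B)
    (hr : 0 < r) (h : ∀ s : Finset ι, ‖∑ i ∈ s, u i‖ ≤ B * (∑ i ∈ s, c i) ^ r) :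
    Summable u := by
  refine summable_iff_vanishing_norm.2 fun ε hε => ?_
  have hB1 : 0 < B + 1 := by linarith
  set δ := (ε / (B + 1)) ^ r⁻¹
  obtain ⟨s₀, hs₀⟩ := summable_iff_vanishing_norm.1 hc δ (by positivity)
  refine ⟨s₀, fun t ht => ?_⟩
  have hct : ∑ i ∈ t, c i < δ := (Real.le_norm_self _).trans_lt (hs₀ t ht)
  have hsum0 : 0 ≤ ∑ i ∈ t, c i := Finset.sum_nonneg fun i _ => hc0 i
  calc ‖∑ i ∈ t, u i‖ ≤ (B + 1) * (∑ i ∈ t, c i) ^ r :=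
        (h t).trans (by gcongr; linarith)
    _ < (B + 1) * δ ^ r := by gcongr
    _ = ε := by
        rw [Real.rpow_inv_rpow (by positivity) hr.ne']
        field_simp

theorem summable_smul_apply_of_norm_sum_le {E : ι → Type*} [∀ i, NormedAddCommGroup (E i)]
    [∀ i, NormedSpace ℝ (E i)] {W : Type*} [NormedAddCommGroup W] [NormedSpace ℝ W]
    [CompleteSpace W] (U : ∀ i, E i →L[ℝ] W) {B q : ℝ} (hB : 0 ≤ B) (hq : 0 < q)
    (hU : ∀ (s : Finset ι) (y : ∀ i, E i),
      ‖∑ i ∈ s, U i (y i)‖ ≤ B * (∑ i ∈ s, ‖y i‖ ^ q) ^ (1 / q))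
    {c : ι → ℝ} {C : ℝ} (hc : ∀ i, |c i| ≤ C) {y : ∀ i, E i}
    (hy : Summable fun i => ‖y i‖ ^ q) : Summable fun i => c i • U i (y i) := by
  have hcy : Summable fun i => ‖c i • y i‖ ^ q := by
    refine .of_nonneg_of_le (fun _ => by positivity) (fun i => ?_) (hy.mul_left (C ^ q))
    rw [norm_smul, Real.norm_eq_abs, Real.mul_rpow (abs_nonneg _) (norm_nonneg _)]
    gcongr
    exact hc i
  simpa only [map_smul] using summable_of_norm_sum_le_mul_rpow (fun _ => by positivity) hcy hB
    (by positivity) fun s => hU s fun i => c i • y i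

theorem summable_of_mul_rpow_sum_le_norm_sum {E : Type*} [SeminormedAddCommGroup E]
    {v : ι → E} (hv : Summable v) {w : ι → ℝ} (hw : 0 ≤ w) {A r : ℝ} (hA : 0 < A) (hr : 0 < r)
    (h : ∀ s : Finset ι, A * (∑ i ∈ s, w i) ^ r ≤ ‖∑ i ∈ s, v i‖) : Summable w := by
  obtain ⟨C, hC⟩ := hv.exists_norm_finset_sum_le
  refine summable_of_sum_le hw (c := (C / A) ^ r⁻¹) fun s => ?_
  have hsum0 : 0 ≤ ∑ i ∈ s, w i := Finset.sum_nonneg fun i _ => hw i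
  calc ∑ i ∈ s, w i = ((∑ i ∈ s, w i) ^ r) ^ r⁻¹ := (Real.rpow_rpow_inv hsum0 hr.ne').symm
    _ ≤ (C / A) ^ r⁻¹ := by
        gcongr
        rw [le_div_iff₀' hA]
        exact (h s).trans (hC s)

theorem le_rpow_of_le_mul_rpow {p q S D : ℝ} (hpq : p.HolderConjugate q) (hS : 0 ≤ S)
    (hD : 0 ≤ D) (hSD : S ≤ D * S ^ (1 / p)) : S ≤ D ^ q := by
  rcases hS.eq_or_lt with rfl | hS
  · positivity
  have hpos : 0 < S ^ (1 / p) := by positivity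
  have hsplit : S = S ^ (1 / q) * S ^ (1 / p) := by
    rw [← Real.rpow_add hS, one_div, one_div, add_comm, hpq.inv_add_inv_eq_one, Real.rpow_one]
  have hq : S ^ (1 / q) ≤ D := le_of_mul_le_mul_right (hsplit ▸ hSD) hpos
  calc S = (S ^ (1 / q)) ^ q := by
        rw [← Real.rpow_mul hS.le, one_div_mul_cancel hpq.symm.ne_zero, Real.rpow_one]
    _ ≤ D ^ q := by gcongr; exact hpq.symm.nonneg

theorem exists_dual_vector_rpow {F : Type*} [NormedAddCommGroup F] [NormedSpace ℝ F] (y : F)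
    {q : ℝ} (hq : q ≠ 0) : ∃ h : StrongDual ℝ F, ‖h‖ ≤ ‖y‖ ^ (q - 1) ∧ h y = ‖y‖ ^ q := by
  obtain ⟨g, hg, hgy⟩ := exists_dual_vector'' ℝ y
  replace hgy : g y = ‖y‖ := hgy
  refine ⟨‖y‖ ^ (q - 1) • g, ?_, ?_⟩
  · rw [norm_smul, Real.norm_eq_abs, abs_of_nonneg (by positivity)]
    exact mul_le_of_le_one_right (by positivity) hg
  · rw [smul_apply, hgy, smul_eq_mul, ← Real.rpow_add_one' (norm_nonneg _)
      (by rwa [sub_add_cancel]), sub_add_cancel]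

theorem summable_norm_rpow_of_norm_sum_opAdj_le {E : Type*} [NormedAddCommGroup E]
    [NormedSpace ℝ E] {F : ι → Type*} [∀ i, NormedAddCommGroup (F i)] [∀ i, NormedSpace ℝ (F i)]
    {p q : ℝ} (hpq : p.HolderConjugate q) (T : ∀ i, E →L[ℝ] F i) {B : ℝ} (hB : 0 ≤ B)
    (hT : ∀ (s : Finset ι) (h : ∀ i, StrongDual ℝ (F i)),
      ‖∑ i ∈ s, opAdj (T i) (h i)‖ ≤ B * (∑ i ∈ s, ‖h i‖ ^ p) ^ (1 / p)) (x : E) :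
    Summable fun i => ‖T i x‖ ^ q := by
  refine summable_of_sum_le (c := (B * ‖x‖) ^ q) (fun _ => by positivity) fun s => ?_
  choose h hh_norm hh_apply using fun i => exists_dual_vector_rpow (T i x) hpq.symm.ne_zero
  set S := ∑ i ∈ s, ‖T i x‖ ^ q
  have hS : S = (∑ i ∈ s, opAdj (T i) (h i)) x := by
    simp [S, hh_apply]
  have hh_sum : ∑ i ∈ s, ‖h i‖ ^ p ≤ S := by
    refine Finset.sum_le_sum fun i _ => ?_
    calc ‖h i‖ ^ p ≤ (‖T i x‖ ^ (q - 1)) ^ p := by gcongr; exacts [hpq.nonneg, hh_norm i]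
      _ = ‖T i x‖ ^ q := by rw [← Real.rpow_mul (norm_nonneg _), hpq.symm.sub_one_mul_conj]
  refine le_rpow_of_le_mul_rpow hpq (by positivity) (by positivity) ?_
  calc S ≤ ‖∑ i ∈ s, opAdj (T i) (h i)‖ * ‖x‖ :=
        hS.le.trans ((Real.le_norm_self _).trans (ContinuousLinearMap.le_opNorm _ _))
    _ ≤ B * (∑ i ∈ s, ‖h i‖ ^ p) ^ (1 / p) * ‖x‖ := by gcongr; exact hT s h
    _ ≤ B * S ^ (1 / p) * ‖x‖ := by gcongr; exact hpq.one_div_nonneg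
    _ = B * ‖x‖ * S ^ (1 / p) := by ring

theorem exists_norm_finset_sum_le_of_summable_apply {𝕜 E F : Type*} [NontriviallyNormedField 𝕜]
    [NormedAddCommGroup E] [NormedSpace 𝕜 E] [CompleteSpace E] [NormedAddCommGroup F]
    [NormedSpace 𝕜 F] {S : ι → E →L[𝕜] F} (hS : ∀ x, Summable fun i => S i x) :
    ∃ C, ∀ s : Finset ι, ‖∑ i ∈ s, S i‖ ≤ C :=
  banach_steinhaus fun x => (hS x).exists_norm_finset_sum_le.imp fun _ hC s => by
    simpa using hC s

theorem exists_rpow_sum_norm_le_of_summable_opAdj {X : Type*} [NormedAddCommGroup X]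
    [NormedSpace ℝ X] {Y : ι → Type*} [∀ i, NormedAddCommGroup (Y i)] [∀ i, NormedSpace ℝ (Y i)]
    {p : ℝ} (T : ∀ i, StrongDual ℝ X →L[ℝ] StrongDual ℝ (Y i)) (D : ∀ i, X →L[ℝ] Y i)
    (hrec : ∀ g, Summable fun i => opAdj (D i) (T i g)) {A : ℝ} (hA : 0 < A)
    (hT : ∀ (s : Finset ι) (h : ∀ i, StrongDual ℝ (StrongDual ℝ (Y i))),
      A * (∑ i ∈ s, ‖h i‖ ^ p) ^ (1 / p) ≤ ‖∑ i ∈ s, opAdj (T i) (h i)‖) :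
    ∃ K, 0 ≤ K ∧ ∀ (s : Finset ι) (x : X), (∑ i ∈ s, ‖D i x‖ ^ p) ^ (1 / p) ≤ K * ‖x‖ := by
  obtain ⟨C, hC⟩ := exists_norm_finset_sum_le_of_summable_apply
    (S := fun i => (opAdj (D i)).comp (T i)) hrec
  refine ⟨max C 0 / A, by positivity, fun s x => ?_⟩
  have hnorm :
      ‖∑ i ∈ s, opAdj (T i) (inclusionInDoubleDual ℝ (Y i) (D i x))‖ ≤ max C 0 * ‖x‖ := by
    refine ContinuousLinearMap.opNorm_le_bound _ (by positivity) fun g => ?_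
    have heval : (∑ i ∈ s, opAdj (T i) (inclusionInDoubleDual ℝ (Y i) (D i x))) g
        = (∑ i ∈ s, (opAdj (D i)).comp (T i)) g x := by
      simp
    rw [heval]
    calc ‖(∑ i ∈ s, (opAdj (D i)).comp (T i)) g x‖
        ≤ ‖∑ i ∈ s, (opAdj (D i)).comp (T i)‖ * ‖g‖ * ‖x‖ := by
          refine (ContinuousLinearMap.le_opNorm _ _).trans ?_
          gcongr
          exact ContinuousLinearMap.le_opNorm _ _
      _ ≤ max C 0 * ‖x‖ * ‖g‖ := by
          rw [mul_right_comm]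
          gcongr
          exact (hC s).trans (le_max_left _ _)
  have hT' := hT s fun i => inclusionInDoubleDual ℝ (Y i) (D i x)
  have hJ : ∀ i (y : Y i), ‖inclusionInDoubleDual ℝ (Y i) y‖ = ‖y‖ := fun i =>
    (inclusionInDoubleDualLi ℝ).norm_map
  simp only [hJ] at hT'
  rw [div_mul_eq_mul_div, le_div_iff₀' hA]
  exact hT'.trans hnorm

theorem norm_sum_opAdj_le_of_rpow_sum_norm_le {X : Type*} [NormedAddCommGroup X]
    [NormedSpace ℝ X] {Y : ι → Type*} [∀ i, NormedAddCommGroup (Y i)] [∀ i, NormedSpace ℝ (Y i)]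
    {p q : ℝ} (hpq : p.HolderConjugate q) (D : ∀ i, X →L[ℝ] Y i) {K : ℝ} (hK : 0 ≤ K)
    (hD : ∀ (s : Finset ι) (x : X), (∑ i ∈ s, ‖D i x‖ ^ p) ^ (1 / p) ≤ K * ‖x‖)
    (s : Finset ι) (y : ∀ i, StrongDual ℝ (Y i)) :
    ‖∑ i ∈ s, opAdj (D i) (y i)‖ ≤ K * (∑ i ∈ s, ‖y i‖ ^ q) ^ (1 / q) := by
  refine ContinuousLinearMap.opNorm_le_bound _ (by positivity) fun x => ?_
  calc ‖(∑ i ∈ s, opAdj (D i) (y i)) x‖ = ‖∑ i ∈ s, y i (D i x)‖ := by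
        simp
    _ ≤ ∑ i ∈ s, ‖y i‖ * ‖D i x‖ :=
        (norm_sum_le _ _).trans (Finset.sum_le_sum fun i _ => (y i).le_opNorm _)
    _ ≤ (∑ i ∈ s, ‖y i‖ ^ q) ^ (1 / q) * (∑ i ∈ s, ‖D i x‖ ^ p) ^ (1 / p) :=
        Real.inner_le_Lp_mul_Lq_of_nonneg s hpq.symm (fun _ _ => norm_nonneg _)
          (fun _ _ => norm_nonneg _)
    _ ≤ (∑ i ∈ s, ‖y i‖ ^ q) ^ (1 / q) * (K * ‖x‖) := by gcongr; exact hD s x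
    _ = K * (∑ i ∈ s, ‖y i‖ ^ q) ^ (1 / q) * ‖x‖ := by ring

end RieszBounds

theorem multiplier_invertible_general
    {X₁ X₂ : Type*} [NormedAddCommGroup X₁] [NormedSpace ℝ X₁]
    [NormedAddCommGroup X₂] [NormedSpace ℝ X₂]
    {Y : ℕ → Type*} [∀ i, NormedAddCommGroup (Y i)] [∀ i, NormedSpace ℝ (Y i)]
    (p q : ℝ) (hp : 1 < p) (hpq : 1 / p + 1 / q = 1)
    (Λ : ∀ i, X₂ →L[ℝ] Y i) (Θ : ∀ i, StrongDual ℝ X₁ →L[ℝ] StrongDual ℝ (Y i))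
    -- `Λ` is a qg-Riesz basis for `X₂*`
    (hΛriesz : ∃ A B : ℝ, 0 < A ∧ 0 < B ∧
      ∀ (s : Finset ℕ) (g : ∀ i, StrongDual ℝ (Y i)),
        A * (∑ i ∈ s, ‖g i‖ ^ q) ^ (1 / q) ≤ ‖∑ i ∈ s, opAdj (Λ i) (g i)‖ ∧
        ‖∑ i ∈ s, opAdj (Λ i) (g i)‖ ≤ B * (∑ i ∈ s, ‖g i‖ ^ q) ^ (1 / q))
    -- `Θ` is a pg-Riesz basis for `X₁`
    (hΘriesz : ∃ A B : ℝ, 0 < A ∧ 0 < B ∧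
      ∀ (s : Finset ℕ) (h : ∀ i, StrongDual ℝ (StrongDual ℝ (Y i))),
        A * (∑ i ∈ s, ‖h i‖ ^ p) ^ (1 / p) ≤ ‖∑ i ∈ s, opAdj (Θ i) (h i)‖ ∧
        ‖∑ i ∈ s, opAdj (Θ i) (h i)‖ ≤ B * (∑ i ∈ s, ‖h i‖ ^ p) ^ (1 / p))
    -- the dual Riesz bases `~Λ` and `~Θ`
    (Λd : ∀ i, StrongDual ℝ X₂ →L[ℝ] StrongDual ℝ (Y i)) (Θd : ∀ i, X₁ →L[ℝ] Y i)
    (hΛd : ∀ f : StrongDual ℝ X₂, Summable (fun i => opAdj (Λ i) (Λd i f)) ∧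
      (∑' i, opAdj (Λ i) (Λd i f)) = f)
    (hΛbi : ∀ (k i : ℕ) (y : StrongDual ℝ (Y i)),
      Λd k (opAdj (Λ i) y) = if h : i = k then h ▸ y else 0)
    (hΘd : ∀ g : StrongDual ℝ X₁, Summable (fun k => opAdj (Θd k) (Θ k g)) ∧
      (∑' k, opAdj (Θd k) (Θ k g)) = g)
    (hΘbi : ∀ (i k : ℕ) (y : StrongDual ℝ (Y k)),
      Θ i (opAdj (Θd k) y) = if h : k = i then h ▸ y else 0)
    -- the symbol `m`
    (m : ℕ → ℝ) (a b : ℝ) (ha : 0 < a)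
    (hm : ∀ i, a ≤ |m i| ∧ |m i| ≤ b) :
    -- `M_{m,Λ,Θ}` is well defined and `M_{1/m,~Θ,~Λ}` is a two-sided inverse
    (∀ g : StrongDual ℝ X₁, Summable (fun i => m i • opAdj (Λ i) (Θ i g)) ∧
      Summable (fun k => (m k)⁻¹ •
        opAdj (Θd k) (Λd k (∑' i, m i • opAdj (Λ i) (Θ i g)))) ∧
      (∑' k, (m k)⁻¹ •
        opAdj (Θd k) (Λd k (∑' i, m i • opAdj (Λ i) (Θ i g)))) = g) ∧
    (∀ f : StrongDual ℝ X₂, Summable (fun k => (m k)⁻¹ • opAdj (Θd k) (Λd k f)) ∧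
      Summable (fun i => m i •
        opAdj (Λ i) (Θ i (∑' k, (m k)⁻¹ • opAdj (Θd k) (Λd k f)))) ∧
      (∑' i, m i •
        opAdj (Λ i) (Θ i (∑' k, (m k)⁻¹ • opAdj (Θd k) (Λd k f)))) = f) ∧
    -- in particular `M_{m,Λ,Θ}` is invertible
    Function.Bijective (fun g : StrongDual ℝ X₁ => ∑' i, m i • opAdj (Λ i) (Θ i g)) := by
  have hpq' : p.HolderConjugate q :=
    Real.holderConjugate_iff.2 ⟨hp, by simpa only [one_div] using hpq⟩
  have hq : 0 < q := hpq'.symm.pos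
  obtain ⟨AΛ, BΛ, hAΛ, hBΛ, hΛr⟩ := hΛriesz
  obtain ⟨AΘ, BΘ, hAΘ, hBΘ, hΘr⟩ := hΘriesz
  have hm0 : ∀ i, m i ≠ 0 := fun i => abs_pos.1 (ha.trans_le (hm i).1)
  have hΘcoef : ∀ g, Summable fun i => ‖Θ i g‖ ^ q :=
    summable_norm_rpow_of_norm_sum_opAdj_le hpq' Θ hBΘ.le fun s h => (hΘr s h).2
  have hM : ∀ g, Summable fun i => m i • opAdj (Λ i) (Θ i g) := fun g =>
    summable_smul_apply_of_norm_sum_le (fun i => opAdj (Λ i)) hBΛ.le hq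
      (fun s y => (hΛr s y).2) (fun i => (hm i).2) (hΘcoef g)
  have hΛdcoef : ∀ f, Summable fun k => ‖Λd k f‖ ^ q := fun f =>
    summable_of_mul_rpow_sum_le_norm_sum (hΛd f).1 (fun _ => by positivity) hAΛ
      (by positivity) fun s => (hΛr s fun k => Λd k f).1
  obtain ⟨K, hK, hΘd_bound⟩ := exists_rpow_sum_norm_le_of_summable_opAdj Θ Θd
    (fun g => (hΘd g).1) hAΘ fun s h => (hΘr s h).1
  have hMinv : ∀ f, Summable fun k => (m k)⁻¹ • opAdj (Θd k) (Λd k f) := fun f =>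
    summable_smul_apply_of_norm_sum_le (fun k => opAdj (Θd k)) hK hq
      (norm_sum_opAdj_le_of_rpow_sum_norm_le hpq' Θd hK hΘd_bound)
      (fun k => (abs_inv (m k)).trans_le (inv_anti₀ ha (hm k).1)) (hΛdcoef f)
  have hleft : ∀ g, HasSum (fun k => (m k)⁻¹ •
      opAdj (Θd k) (Λd k (multiplier m (fun i => opAdj (Λ i)) Θ g))) g := fun g =>
    hasSum_multiplier_inv_multiplier hm0 hΛbi ((hΘd g).1.hasSum_iff.2 (hΘd g).2) (hM g)
  have hright : ∀ f, HasSum (fun i => m i •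
      opAdj (Λ i) (Θ i (multiplier (fun k => (m k)⁻¹) (fun k => opAdj (Θd k)) Λd f))) f :=
    fun f => by
      simpa only [inv_inv] using hasSum_multiplier_inv_multiplier (fun k => inv_ne_zero (hm0 k))
        hΘbi ((hΛd f).1.hasSum_iff.2 (hΛd f).2) (hMinv f)
  refine ⟨fun g => ⟨hM g, (hleft g).summable, (hleft g).tsum_eq⟩,
    fun f => ⟨hMinv f, (hright f).summable, (hright f).tsum_eq⟩, ?_, ?_⟩
  · exact Function.LeftInverse.injective
      (g := multiplier (fun k => (m k)⁻¹) (fun k => opAdj (Θd k)) Λd) fun g => (hleft g).tsum_eq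
  · exact Function.RightInverse.surjective
      (g := multiplier (fun k => (m k)⁻¹) (fun k => opAdj (Θd k)) Λd) fun f => (hright f).tsum_eq

/-- if `Λ` is a qg-Riesz basis for `X₂*`, `Θ` a pg-Riesz basis for `X₁`
and `0 < inf |mᵢ| ≤ sup |mᵢ| < ∞`, then `M_{m,Λ,Θ}` is invertible with inverse the
multiplier `M_{1/m,~Θ,~Λ}` built from the dual Riesz bases `~Λ, ~Θ`. -/
theorem multiplier_invertible
    {X₁ X₂ : Type*} [NormedAddCommGroup X₁] [NormedSpace ℝ X₁] [CompleteSpace X₁]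
    [NormedAddCommGroup X₂] [NormedSpace ℝ X₂] [CompleteSpace X₂]
    {Y : ℕ → Type*} [∀ i, NormedAddCommGroup (Y i)] [∀ i, NormedSpace ℝ (Y i)]
    [∀ i, CompleteSpace (Y i)]
    (hreflX₁ : Function.Surjective (inclusionInDoubleDual ℝ X₁))
    (hreflX₂ : Function.Surjective (inclusionInDoubleDual ℝ X₂))
    (hreflY : ∀ i, Function.Surjective (inclusionInDoubleDual ℝ (Y i)))
    (p q : ℝ) (hp : 1 < p) (hpq : 1 / p + 1 / q = 1)
    (Λ : ∀ i, X₂ →L[ℝ] Y i) (Θ : ∀ i, StrongDual ℝ X₁ →L[ℝ] StrongDual ℝ (Y i))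
    -- `Λ` is a qg-Riesz basis for `X₂*`
    (hΛcomplete : ∀ x : X₂, (∀ i, Λ i x = 0) → x = 0)
    (hΛriesz : ∃ A B : ℝ, 0 < A ∧ 0 < B ∧
      ∀ (s : Finset ℕ) (g : ∀ i, StrongDual ℝ (Y i)),
        A * (∑ i ∈ s, ‖g i‖ ^ q) ^ (1 / q) ≤ ‖∑ i ∈ s, opAdj (Λ i) (g i)‖ ∧
        ‖∑ i ∈ s, opAdj (Λ i) (g i)‖ ≤ B * (∑ i ∈ s, ‖g i‖ ^ q) ^ (1 / q))
    -- `Θ` is a pg-Riesz basis for `X₁`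
    (hΘcomplete : ∀ g : StrongDual ℝ X₁, (∀ i, Θ i g = 0) → g = 0)
    (hΘriesz : ∃ A B : ℝ, 0 < A ∧ 0 < B ∧
      ∀ (s : Finset ℕ) (h : ∀ i, StrongDual ℝ (StrongDual ℝ (Y i))),
        A * (∑ i ∈ s, ‖h i‖ ^ p) ^ (1 / p) ≤ ‖∑ i ∈ s, opAdj (Θ i) (h i)‖ ∧
        ‖∑ i ∈ s, opAdj (Θ i) (h i)‖ ≤ B * (∑ i ∈ s, ‖h i‖ ^ p) ^ (1 / p))
    -- the dual Riesz bases `~Λ` and `~Θ`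
    (Λd : ∀ i, StrongDual ℝ X₂ →L[ℝ] StrongDual ℝ (Y i)) (Θd : ∀ i, X₁ →L[ℝ] Y i)
    (hΛd : ∀ f : StrongDual ℝ X₂, Summable (fun i => opAdj (Λ i) (Λd i f)) ∧
      (∑' i, opAdj (Λ i) (Λd i f)) = f)
    (hΛbi : ∀ (k i : ℕ) (y : StrongDual ℝ (Y i)),
      Λd k (opAdj (Λ i) y) = if h : i = k then h ▸ y else 0)
    (hΘd : ∀ g : StrongDual ℝ X₁, Summable (fun k => opAdj (Θd k) (Θ k g)) ∧
      (∑' k, opAdj (Θd k) (Θ k g)) = g)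
    (hΘbi : ∀ (i k : ℕ) (y : StrongDual ℝ (Y k)),
      Θ i (opAdj (Θd k) y) = if h : k = i then h ▸ y else 0)
    -- the symbol `m`
    (m : ℕ → ℝ) (a b : ℝ) (ha : 0 < a)
    (hm : ∀ i, a ≤ |m i| ∧ |m i| ≤ b) :
    -- `M_{m,Λ,Θ}` is well defined and `M_{1/m,~Θ,~Λ}` is a two-sided inverse
    (∀ g : StrongDual ℝ X₁, Summable (fun i => m i • opAdj (Λ i) (Θ i g)) ∧
      Summable (fun k => (m k)⁻¹ •
        opAdj (Θd k) (Λd k (∑' i, m i • opAdj (Λ i) (Θ i g)))) ∧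
      (∑' k, (m k)⁻¹ •
        opAdj (Θd k) (Λd k (∑' i, m i • opAdj (Λ i) (Θ i g)))) = g) ∧
    (∀ f : StrongDual ℝ X₂, Summable (fun k => (m k)⁻¹ • opAdj (Θd k) (Λd k f)) ∧
      Summable (fun i => m i •
        opAdj (Λ i) (Θ i (∑' k, (m k)⁻¹ • opAdj (Θd k) (Λd k f)))) ∧
      (∑' i, m i •
        opAdj (Λ i) (Θ i (∑' k, (m k)⁻¹ • opAdj (Θd k) (Λd k f)))) = f) ∧
    -- in particular `M_{m,Λ,Θ}` is invertible
    Function.Bijective (fun g : StrongDual ℝ X₁ => ∑' i, m i • opAdj (Λ i) (Θ i g)) :=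
  multiplier_invertible_general p q hp hpq Λ Θ hΛriesz hΘriesz Λd Θd hΛd hΛbi hΘd hΘbi m a b ha hm
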